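/- The multivariate generating function for words over the alphabet {1,...,n} avoiding the consecutive pattern 123 is 1/(1 - e_1 + e_3 - e_4 + e_6 - e_7 + e_9 - e_{10} + ...), where e_i is the i-th elementary symmetric polynomial in x_1,...,x_n. Equivalently, the coefficient of x_1^{m_1}···x_n^{m_n} in this rational power series equals the number of words consisting of m_1 ones, ..., m_n n's with no three consecutive strictly increasing letters. -/

import Mathlib

/-!
Let `P = ∑_S runSign #S • x^S` over the subsets `S` of the alphabet, where `runSign k` is `1, -1, 0`
for `k ≡ 0, 1, 2 (mod 3)`; grouping by `#S` gives the polynomial of the statement. The coefficient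
of `x^d` in `F * P` is `∑_S runSign #S · #{avoiding words of content d - S}`, and prepending the
increasing word of `S` turns it into a signed count of pairs `(v, j)`: `v` has content `d`, its
first `j` letters increase strictly and the rest of `v` avoids `123`. If `v ≠ []` has maximal
strictly increasing prefix `p`, the admissible `j` are either none or exactly `#p - 2, …, #p`
(cut off at `0`), and their signs cancel; only `v = []` survives.
-/
def AvoidsInc {α : Type*} [LT α] (r : ℕ) (w : List α) : Prop :=
  ¬ ∃ l : List α, l <:+: w ∧ l.length = r ∧ l.Chain' (· < ·)

/-- Number of words over `Fin n` with multiplicity vector `m` avoiding the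
consecutive pattern `1 2 ... r`. -/
noncomputable def wordAvoidCount (r n : ℕ) (m : Fin n → ℕ) : ℕ :=
  Nat.card {w : List (Fin n) // (∀ j, w.count j = m j) ∧ AvoidsInc r w}

noncomputable def wordAvoidGF (r n : ℕ) : MvPowerSeries (Fin n) ℤ :=
  fun d => (wordAvoidCount r n ⇑d : ℤ)

variable {α : Type*}

section LT

open List

variable [LT α]

theorem avoidsInc_of_length_lt {r : ℕ} {w : List α} (h : w.length < r) : AvoidsInc r w :=
  fun ⟨_, hl, hlen, _⟩ => by have := hl.length_le; omega

theorem avoidsInc_three_cons_cons_cons {a b c : α} {w : List α} :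
    AvoidsInc 3 (a :: b :: c :: w) ↔ ¬ (a < b ∧ b < c) ∧ AvoidsInc 3 (b :: c :: w) := by
  simp only [AvoidsInc, infix_cons_iff (a := a), or_and_right, exists_or, not_or]
  refine and_congr_left'
    ⟨fun h hlt => h ⟨[a, b, c], by simp, rfl, (by simpa using hlt : IsChain (· < ·) [a, b, c])⟩, ?_⟩
  rintro h ⟨l, hl, hlen, hc⟩
  obtain rfl : l = [a, b, c] := by rw [prefix_iff_eq_take.mp hl, hlen]; rfl
  have hc : IsChain (· < ·) [a, b, c] := hc
  exact h (by simpa using hc)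

theorem avoidsInc_three_append {p r : List α} (hp : p.IsChain (· < ·))
    (hpr : ∀ x ∈ p.getLast?, ∀ y ∈ r.head?, ¬ x < y) :
    AvoidsInc 3 (p ++ r) ↔ p.length ≤ 2 ∧ AvoidsInc 3 r := by
  have peel : ∀ (a : α) (r : List α), (∀ y ∈ r.head?, ¬ a < y) →
      ∀ b : α, (AvoidsInc 3 (b :: a :: r) ↔ AvoidsInc 3 (a :: r)) ∧
        (AvoidsInc 3 (a :: r) ↔ AvoidsInc 3 r) := by
    rintro a (_ | ⟨y, _ | ⟨z, r⟩⟩) h b <;>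
      simp_all [avoidsInc_of_length_lt, avoidsInc_three_cons_cons_cons]
  match p, hp, hpr with
  | [], _, _ => simp
  | [a], _, hpr => simpa using (peel a r (by simpa using hpr) a).2
  | [a, b], _, hpr =>
    simpa using ((peel b r (by simpa using hpr) a).1.trans (peel b r (by simpa using hpr) a).2)
  | a :: b :: c :: p, hp, _ =>
    simp only [isChain_cons_cons] at hp
    simp [avoidsInc_three_cons_cons_cons, hp.1, hp.2.1]

theorem exists_eq_append_maximal_chain : ∀ {v : List α}, v ≠ [] →
    ∃ p r, v = p ++ r ∧ p ≠ [] ∧ p.IsChain (· < ·) ∧ ∀ x ∈ p.getLast?, ∀ y ∈ r.head?, ¬ x < y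
  | [a], _ => ⟨[a], [], by simp⟩
  | a :: b :: v, _ => by
    obtain ⟨_ | ⟨c, p⟩, r, hv, hp0, hp, hpr⟩ := exists_eq_append_maximal_chain (cons_ne_nil b v)
    · exact absurd rfl hp0
    obtain ⟨rfl, rfl⟩ : b = c ∧ v = p ++ r := by simpa using hv
    by_cases hab : a < b
    · exact ⟨a :: b :: p, r, rfl, by simp, isChain_cons_cons.mpr ⟨hab, hp⟩, by simpa using hpr⟩
    · exact ⟨[a], b :: (p ++ r), rfl, by simp, by simp, by simpa using hab⟩

theorem isChain_take_append_iff {p r : List α} (hp0 : p ≠ []) (hp : p.IsChain (· < ·))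
    (hpr : ∀ x ∈ p.getLast?, ∀ y ∈ r.head?, ¬ x < y) {j : ℕ} (hj : j ≤ (p ++ r).length) :
    ((p ++ r).take j).IsChain (· < ·) ↔ j ≤ p.length := by
  refine ⟨fun h => ?_, fun h => take_append_of_le_length h ▸ hp.take j⟩
  by_contra! hlt
  obtain ⟨x, hx⟩ := Option.isSome_iff_exists.mp (getLast?_isSome.mpr hp0)
  obtain ⟨y, r', rfl⟩ := exists_cons_of_ne_nil (l := r) (by rintro rfl; simp at hj; omega)
  rw [take_append, take_of_length_le hlt.le, isChain_append] at h
  exact hpr x hx y rfl (h.2.2 x hx y (by rw [head?_take]; simp; omega))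

theorem avoidsInc_three_drop_append_iff {p r : List α} (hp : p.IsChain (· < ·))
    (hpr : ∀ x ∈ p.getLast?, ∀ y ∈ r.head?, ¬ x < y) {j : ℕ} (hj : j ≤ p.length) :
    AvoidsInc 3 ((p ++ r).drop j) ↔ p.length ≤ j + 2 ∧ AvoidsInc 3 r := by
  rw [drop_append_of_le_length hj, avoidsInc_three_append (hp.drop j), length_drop]
  · exact and_congr_left' (by omega)
  · rw [getLast?_drop]
    split_ifs
    · simp
    · exact hpr

end LT

/-- The coefficient of `z ^ k` in `(1 - z) / (1 - z ^ 3) = 1 - z + z ^ 3 - z ^ 4 + ⋯`. -/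
def runSign (k : ℕ) : ℤ :=
  if k % 3 = 0 then 1 else if k % 3 = 1 then -1 else 0

theorem sum_runSign_Icc_sub_two {k : ℕ} (hk : 1 ≤ k) :
    ∑ j ∈ Finset.Icc (k - 2) k, runSign j = 0 := by
  obtain rfl | ⟨m, rfl⟩ : k = 1 ∨ ∃ m, k = m + 2 := by rcases k with _ | _ | m <;> simp_all
  · decide
  · rw [Nat.add_sub_cancel, Finset.sum_Icc_succ_top (by omega),
      Finset.sum_Icc_succ_top (by omega), Finset.Icc_self, Finset.sum_singleton]
    unfold runSign
    omega

open Finset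

open Classical in
theorem sum_runSign_isChain_take_avoidsInc_drop [LT α] [DecidableRel (α := α) (· < ·)]
    (v : List α) :
    ∑ j ∈ range (v.length + 1),
        (if (v.take j).IsChain (· < ·) ∧ AvoidsInc 3 (v.drop j) then runSign j else 0) =
      if v = [] then 1 else 0 := by
  rcases eq_or_ne v [] with rfl | hv
  · simp [runSign, avoidsInc_of_length_lt]
  obtain ⟨p, r, rfl, hp0, hp, hpr⟩ := exists_eq_append_maximal_chain hv
  have hcut : ∀ j ∈ range ((p ++ r).length + 1),
      ((p ++ r).take j).IsChain (· < ·) ∧ AvoidsInc 3 ((p ++ r).drop j) ↔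
        j ∈ Icc (p.length - 2) p.length ∧ AvoidsInc 3 r := by
    intro j hj
    rw [isChain_take_append_iff hp0 hp hpr (mem_range_succ_iff.mp hj), mem_Icc]
    constructor
    · rintro ⟨hjp, hdrop⟩
      obtain ⟨hpj, hr⟩ := (avoidsInc_three_drop_append_iff hp hpr hjp).mp hdrop
      exact ⟨⟨by omega, hjp⟩, hr⟩
    · rintro ⟨⟨hpj, hjp⟩, hr⟩
      exact ⟨hjp, (avoidsInc_three_drop_append_iff hp hpr hjp).mpr ⟨by omega, hr⟩⟩
  have hIcc : Icc (p.length - 2) p.length ⊆ range ((p ++ r).length + 1) := fun j hj => by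
    simp only [mem_Icc, mem_range, List.length_append] at hj ⊢; omega
  rw [sum_congr rfl fun j hj => if_congr (hcut j hj) rfl rfl, if_neg hv]
  by_cases hr : AvoidsInc 3 r
  · simp only [hr, and_true]
    rw [sum_ite_mem, inter_eq_right.mpr hIcc,
      sum_runSign_Icc_sub_two (List.length_pos_iff.mpr hp0)]
  · simp [hr]

theorem Multiset.mem_lists_toFinset_iff [DecidableEq α] {m : Multiset α} {v : List α} :
    v ∈ m.lists.toFinset ↔ (v : Multiset α) = m := by
  rw [Multiset.mem_toFinset, Multiset.mem_lists_iff, eq_comm]; rfl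

theorem card_filter_prefix_lists [DecidableEq α] (u : List α) (m : Multiset α)
    (P : List α → Prop) [DecidablePred P] :
    #{v ∈ m.lists.toFinset | u <+: v ∧ P (v.drop u.length)} =
      if (u : Multiset α) ≤ m then #{w ∈ (m - u).lists.toFinset | P w} else 0 := by
  split_ifs with hu
  · symm
    refine card_bij' (fun w _ => u ++ w) (fun v _ => v.drop u.length) ?_ ?_ ?_ ?_
    · simp only [mem_filter, Multiset.mem_lists_toFinset_iff]
      rintro w ⟨hw, hP⟩
      refine ⟨?_, List.prefix_append u w, by simpa using hP⟩
      rw [← Multiset.coe_add, hw, add_tsub_cancel_of_le hu]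
    · simp only [mem_filter, Multiset.mem_lists_toFinset_iff]
      rintro v ⟨rfl, huv, hv⟩
      refine ⟨?_, hv⟩
      conv_rhs => rw [← List.prefix_iff_eq_append.mp huv]
      rw [← Multiset.coe_add, add_tsub_cancel_left]
    · intro w _; simp
    · simp only [mem_filter, Multiset.mem_lists_toFinset_iff]
      rintro v ⟨-, huv, -⟩
      exact List.prefix_iff_eq_append.mp huv
  · rw [card_eq_zero, filter_eq_empty_iff]
    simp only [Multiset.mem_lists_toFinset_iff]
    rintro v rfl ⟨huv, -⟩
    exact hu (Multiset.coe_le.mpr huv.sublist.subperm)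

open Classical in
theorem sum_powerset_ite_sort_prefix {M : Type*} [AddCommMonoid M] [Fintype α] [LinearOrder α]
    (v : List α) (g : ℕ → M) :
    ∑ S ∈ univ.powerset, (if S.sort <+: v then g #S else 0) =
      ∑ j ∈ range (v.length + 1), if (v.take j).IsChain (· < ·) then g j else 0 := by
  rw [← sum_filter, ← sum_filter]
  refine sum_nbij' (fun S => #S) (fun j => (v.take j).toFinset) ?_ ?_ ?_ ?_ (fun _ _ => rfl)
  · intro S hS
    simp only [mem_filter, mem_range] at hS ⊢
    replace hS := hS.2
    have hlen := hS.length_le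
    rw [length_sort] at hlen
    refine ⟨by omega, ?_⟩
    rw [← length_sort (· ≤ ·) (s := S), ← List.prefix_iff_eq_take.mp hS]
    exact List.isChain_iff_pairwise.mpr (List.sortedLT_iff_pairwise.mp S.sortedLT_sort)
  · intro j hj
    simp only [mem_filter, mem_powerset] at hj ⊢
    replace hj := hj.2
    rw [(List.toFinset_sort _ (List.isChain_iff_pairwise.mp hj).nodup).mpr
      ((List.isChain_iff_pairwise.mp hj).imp le_of_lt)]
    exact ⟨subset_univ _, List.take_prefix j v⟩
  · intro S hS
    replace hS := (mem_filter.mp hS).2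
    rw [← length_sort (· ≤ ·) (s := S), ← List.prefix_iff_eq_take.mp hS, sort_toFinset]
  · intro j hj
    obtain ⟨hj, hc⟩ := mem_filter.mp hj
    rw [mem_range] at hj
    rw [List.toFinset_card_of_nodup (List.isChain_iff_pairwise.mp hc).nodup, List.length_take]
    omega

open Classical in
theorem sum_powerset_runSign_mul_card_avoiding [Fintype α] [LinearOrder α] (m : Multiset α) :
    ∑ S ∈ univ.powerset, runSign #S *
        ((if S.val ≤ m then #{w ∈ (m - S.val).lists.toFinset | AvoidsInc 3 w} else 0 : ℕ) : ℤ) =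
      if m = 0 then 1 else 0 := by
  have hprefix : ∀ S : Finset α,
      (if S.val ≤ m then #{w ∈ (m - S.val).lists.toFinset | AvoidsInc 3 w} else 0) =
        #{v ∈ m.lists.toFinset | S.sort <+: v ∧ AvoidsInc 3 (v.drop #S)} := fun S => by
    have := (card_filter_prefix_lists S.sort m (AvoidsInc 3)).symm
    rw [sort_eq, length_sort] at this
    exact this
  have hword : ∀ v : List α,
      ∑ S ∈ univ.powerset, (if S.sort <+: v ∧ AvoidsInc 3 (v.drop #S) then runSign #S else 0) =
        if v = [] then 1 else 0 := fun v => by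
    simp_rw [ite_and]
    rw [sum_powerset_ite_sort_prefix v (fun j => if AvoidsInc 3 (v.drop j) then runSign j else 0),
      ← sum_runSign_isChain_take_avoidsInc_drop]
    simp_rw [ite_and]
  simp_rw [hprefix, card_filter, Nat.cast_sum, Nat.cast_ite, Nat.cast_one, Nat.cast_zero, mul_sum,
    mul_ite, mul_one, mul_zero]
  rw [sum_comm, sum_congr rfl fun v _ => hword v, sum_ite_eq']
  simp

theorem sum_range_three_mul_runSign_smul {M : Type*} [AddCommGroup M] (f : ℕ → M) (N : ℕ) :
    ∑ k ∈ range (3 * N), runSign k • f k = ∑ m ∈ range N, (f (3 * m) - f (3 * m + 1)) := by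
  induction N with
  | zero => simp
  | succ N ih =>
    have h0 : runSign (3 * N) = 1 := by simp [runSign]
    have h1 : runSign (3 * N + 1) = -1 := by simp [runSign, Nat.add_mod]
    have h2 : runSign (3 * N + 2) = 0 := by simp [runSign, Nat.add_mod]
    rw [show 3 * (N + 1) = 3 * N + 2 + 1 by ring, sum_range_succ, sum_range_succ, sum_range_succ,
      ih, sum_range_succ, h0, h1, h2]
    simp [sub_eq_add_neg, add_assoc]

open MvPolynomial in
theorem sum_powerset_runSign_smul_monomial (σ R : Type*) [Fintype σ] [CommRing R] :
    ∑ S ∈ (univ : Finset σ).powerset, runSign #S • monomial (∑ i ∈ S, Finsupp.single i 1) (1 : R) =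
      1 - esymm σ R 1 +
        ∑ m ∈ Icc 1 (Fintype.card σ), (esymm σ R (3 * m) - esymm σ R (3 * m + 1)) := by
  have hesymm : ∀ k, Fintype.card σ < k → esymm σ R k = 0 := fun k hk => by
    rw [esymm, powersetCard_eq_empty.mpr (by simpa using hk), sum_empty]
  calc ∑ S ∈ (univ : Finset σ).powerset, runSign #S • monomial (∑ i ∈ S, Finsupp.single i 1) (1 : R)
      = ∑ k ∈ range (Fintype.card σ + 1), runSign k • esymm σ R k := by
        rw [sum_powerset]
        refine sum_congr (by simp) fun k _ => ?_
        rw [esymm_eq_sum_monomial, smul_sum]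
        exact sum_congr rfl fun S hS => by rw [(mem_powersetCard.mp hS).2]
    _ = ∑ k ∈ range (3 * (Fintype.card σ + 1)), runSign k • esymm σ R k := by
        refine sum_subset (range_subset_range.mpr (by omega)) fun k _ hk => ?_
        rw [hesymm k (by simpa using hk), smul_zero]
    _ = _ := by
        rw [sum_range_three_mul_runSign_smul, range_eq_Ico, sum_eq_sum_Ico_succ_bot (by omega),
          Ico_add_one_right_eq_Icc]
        simp [sub_eq_add_neg, add_assoc]

open Classical in
theorem coeff_wordAvoidGF (r n : ℕ) (d : Fin n →₀ ℕ) :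
    MvPowerSeries.coeff d (wordAvoidGF r n) =
      #{w ∈ (Finsupp.toMultiset d).lists.toFinset | AvoidsInc r w} := by
  have hcount : ∀ w : List (Fin n),
      (∀ j, w.count j = d j) ↔ (w : Multiset (Fin n)) = d.toMultiset :=
    fun w => by simp [Multiset.ext, Finsupp.count_toMultiset]
  change ((Nat.card _ : ℕ) : ℤ) = _
  rw [← Nat.card_eq_finsetCard]
  congr 1
  exact Nat.card_congr (Equiv.subtypeEquivRight fun w => by
    rw [mem_filter, Multiset.mem_lists_toFinset_iff, hcount])

open Classical in
theorem coeff_wordAvoidGF_mul_monomial (r n : ℕ) (S : Finset (Fin n)) (d : Fin n →₀ ℕ) :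
    MvPowerSeries.coeff d
        (wordAvoidGF r n * MvPowerSeries.monomial (∑ i ∈ S, Finsupp.single i 1) 1) =
      ((if S.val ≤ d.toMultiset then
        #{w ∈ (d.toMultiset - S.val).lists.toFinset | AvoidsInc r w} else 0 : ℕ) : ℤ) := by
  have hS : (∑ i ∈ S, Finsupp.single i 1).toMultiset = S.val := by
    rw [Finsupp.toMultiset_sum_single, one_nsmul]
  have hle : (∑ i ∈ S, Finsupp.single i 1).toMultiset ≤ d.toMultiset ↔
      ∑ i ∈ S, Finsupp.single i 1 ≤ d := Finsupp.orderIsoMultiset.le_iff_le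
  rw [MvPowerSeries.coeff_mul_monomial, ← hS]
  by_cases h : ∑ i ∈ S, Finsupp.single i 1 ≤ d
  · rw [if_pos h, if_pos (hle.mpr h), mul_one, coeff_wordAvoidGF,
      map_tsub_of_le Finsupp.toMultiset d _ h]
  · rw [if_neg h, if_neg (mt hle.mp h), Nat.cast_zero]

/-- The generating function for words over `{1,...,n}` avoiding the consecutive
pattern `123` is `1/(1 - e₁ + e₃ - e₄ + e₆ - e₇ + e₉ - e₁₀ + ⋯)`. -/
theorem words_avoiding_123_gf (n : ℕ) :
    wordAvoidGF 3 n *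
      ((1 - MvPolynomial.esymm (Fin n) ℤ 1 +
        ∑ m ∈ Finset.Icc 1 n,
          (MvPolynomial.esymm (Fin n) ℤ (3 * m) -
            MvPolynomial.esymm (Fin n) ℤ (3 * m + 1)) :
        MvPolynomial (Fin n) ℤ) : MvPowerSeries (Fin n) ℤ) = 1 := by
  have hP := sum_powerset_runSign_smul_monomial (Fin n) ℤ
  rw [Fintype.card_fin] at hP
  ext d
  rw [← hP, ← MvPolynomial.coeToMvPowerSeries.ringHom_apply, map_sum, mul_sum, map_sum,
    MvPowerSeries.coeff_one]
  simp_rw [map_zsmul, MvPolynomial.coeToMvPowerSeries.ringHom_apply, MvPolynomial.coe_monomial,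
    mul_smul_comm, map_zsmul, coeff_wordAvoidGF_mul_monomial, smul_eq_mul]
  rw [sum_powerset_runSign_mul_card_avoiding]
  exact if_congr (map_eq_zero_iff _ Multiset.toFinsupp.symm.injective) rfl rfl
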